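/- arXiv:2305.07274 — 2 statements merged into one kernel-verified Lean document; each statement's English description precedes it below -/
import Mathlib

section
/- For every positive integer n, the following identity of formal power series over ℤ holds: Σ_{T≥0} A(n,T) z^T = (z + z² + z³ + z⁴)^n · (1 − z)^{−1}, where (1 − z)^{−1} is the inverse of the power series 1 − z (which has constant term 1 and hence is a unit in ℤ⟦z⟧). -/
/-- A list of integers is quaternary if all entries lie in {1,2,3,4}. -/
def IsQ (x : List ℤ) : Prop := ∀ a ∈ x, 1 ≤ a ∧ a ≤ 4

/-- The alternating quaternary supersequence 1,2,3,4,1,2,3,4,... of length `T`. -/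
def altSeq (T : ℕ) : List ℤ := (List.range T).map (fun i => ((i % 4 : ℕ) : ℤ) + 1)

/-- The synthesis time of `x`: the least `T` such that `x` is a subsequence of `altSeq T`. -/
noncomputable def synTime (x : List ℤ) : ℕ := sInf {T : ℕ | x.Sublist (altSeq T)}

/-- The shifted modulo: the unique element of {1,2,3,4} congruent to `a` mod 4. -/
def mods4 (a : ℤ) : ℤ := (a - 1) % 4 + 1

/-- The differential word of `x`. -/
def diffWord (x : List ℤ) : List ℤ := List.zipWith (fun p c => mods4 (c - p)) (0 :: x) x

/-- The set of quaternary words of length `n` with synthesis time at most `T`. -/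
def W (n : ℕ) (T : ℤ) : Set (List ℤ) :=
  {x | x.length = n ∧ IsQ x ∧ (synTime x : ℤ) ≤ T}

/-- `A n T` is the number of quaternary words of length `n` with synthesis time at most `T`. -/
noncomputable def A (n : ℕ) (T : ℤ) : ℕ := (W n T).ncard

/-- The single-indel ball of `x`. -/
def ball (x : List ℤ) : Set (List ℤ) :=
  {y | y = x ∨ (y.length + 1 = x.length ∧ y.Sublist x) ∨
       (x.length + 1 = y.length ∧ IsQ y ∧ x.Sublist y)}

/-- The auxiliary binary sequence of `x` (as 0/1 naturals). -/
def auxSeq (x : List ℤ) : List ℕ :=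
  List.zipWith (fun a b => if a ≤ b then 1 else 0) x x.tail

/-- VT syndrome of a binary word: `∑ i·w_i` with positions starting from 1. -/
def vtSyn (w : List ℕ) : ℕ := ∑ i ∈ Finset.range w.length, (i + 1) * w.getD i 0

/-- The quaternary VT code. -/
def VTn (n : ℕ) (a : ZMod n) (b : ZMod 4) : Set (List ℤ) :=
  {x | x.length = n ∧ IsQ x ∧ ((vtSyn (auxSeq x) : ℕ) : ZMod n) = a ∧
       ((x.sum : ℤ) : ZMod 4) = b}

/-- The quaternary VT code with synthesis time constraint. -/
def VTnT (n : ℕ) (a : ZMod n) (b : ZMod 4) (T : ℤ) : Set (List ℤ) :=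
  {x ∈ VTn n a b | (synTime x : ℤ) ≤ T}

/-!
Write a quaternary word `x` through its differential word `d = diffWord x`, where
`dᵢ ∈ {1,2,3,4}` is the residue of `xᵢ - xᵢ₋₁` (with `x₀ = 0`). Greedily embedding `x` into
the alternating sequence shows that `x` is synthesised in exactly `d₁ + ⋯ + dₙ` steps: after
writing `xᵢ₋₁`, the next occurrence of `xᵢ` comes `dᵢ` positions later. Since `x ↦ diffWord x`
is a bijection of `{1,2,3,4}ⁿ`, `A(n,T)` counts the `d ∈ {1,2,3,4}ⁿ` with `∑ dᵢ ≤ T`; the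
generating function of `∑ dᵢ` is `(z + z² + z³ + z⁴)ⁿ`, and summing up to `T` is multiplication
by `(1 - z)⁻¹`.
-/

lemma one_le_mods4 (a : ℤ) : 1 ≤ mods4 a := by
  have := Int.emod_nonneg (a - 1) four_ne_zero
  unfold mods4; omega

lemma mods4_le_four (a : ℤ) : mods4 a ≤ 4 := by
  have := Int.emod_lt_of_pos (a - 1) four_pos
  unfold mods4; omega

lemma mods4_of_le {a : ℤ} (h1 : 1 ≤ a) (h4 : a ≤ 4) : mods4 a = a := by
  unfold mods4; omega

lemma mods4_modEq (a : ℤ) : mods4 a ≡ a [ZMOD 4] := by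
  unfold mods4 Int.ModEq; omega

lemma mods4_congr {a b : ℤ} (h : a ≡ b [ZMOD 4]) : mods4 a = mods4 b := by
  unfold mods4; unfold Int.ModEq at h; omega

lemma mods4_le_mods4_sub_one_add_one (a : ℤ) : mods4 a ≤ mods4 (a - 1) + 1 := by
  unfold mods4; omega

lemma isQ_cons {c : ℤ} {x : List ℤ} : IsQ (c :: x) ↔ (1 ≤ c ∧ c ≤ 4) ∧ IsQ x :=
  List.forall_mem_cons

/-- The alternating sequence continuing after the symbol `p`. -/
def altFrom (p : ℤ) (T : ℕ) : List ℤ := (List.range T).map fun i : ℕ => mods4 (p + i + 1)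

lemma altSeq_eq_altFrom_zero (T : ℕ) : altSeq T = altFrom 0 T := by
  unfold altSeq altFrom
  refine List.map_congr_left fun i _ => ?_
  unfold mods4; omega

lemma altFrom_add (p : ℤ) (a b : ℕ) : altFrom p (a + b) = altFrom p a ++ altFrom (p + a) b := by
  simp only [altFrom, List.range_add, List.map_append, List.map_map]
  congr 2
  funext i
  simp only [Function.comp, Nat.cast_add]
  ring_nf

lemma altFrom_one (p : ℤ) : altFrom p 1 = [mods4 (p + 1)] := by
  simp [altFrom]

lemma altFrom_succ (p : ℤ) (T : ℕ) : altFrom p (T + 1) = mods4 (p + 1) :: altFrom (p + 1) T := by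
  rw [add_comm, altFrom_add, altFrom_one, Nat.cast_one, List.singleton_append]

lemma altFrom_congr {p q : ℤ} (h : p ≡ q [ZMOD 4]) (T : ℕ) : altFrom p T = altFrom q T :=
  List.map_congr_left fun _ _ => mods4_congr ((h.add_right _).add_right _)

/-- The differential word of `x` when the symbol written before `x` is `p`. -/
def diffFrom (p : ℤ) (x : List ℤ) : List ℤ := List.zipWith (fun p c => mods4 (c - p)) (p :: x) x

lemma diffFrom_nil (p : ℤ) : diffFrom p [] = [] := rfl

lemma diffFrom_cons (p c : ℤ) (x : List ℤ) :
    diffFrom p (c :: x) = mods4 (c - p) :: diffFrom c x := rfl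

lemma length_diffFrom (p : ℤ) (x : List ℤ) : (diffFrom p x).length = x.length := by
  simp [diffFrom]

lemma isQ_diffFrom (p : ℤ) (x : List ℤ) : IsQ (diffFrom p x) := by
  induction x generalizing p with
  | nil => simp [diffFrom_nil, IsQ]
  | cons c x ih => exact isQ_cons.2 ⟨⟨one_le_mods4 _, mods4_le_four _⟩, ih c⟩

lemma sum_diffFrom_le_of_sublist (x : List ℤ) (p : ℤ) (T : ℕ) (h : x.Sublist (altFrom p T)) :
    (diffFrom p x).sum ≤ T := by
  induction x generalizing p T with
  | nil => simp [diffFrom_nil]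
  | cons c x ih =>
    induction T generalizing p with
    | zero => simp [altFrom] at h
    | succ T ihT =>
      rw [altFrom_succ] at h
      rcases List.sublist_cons_iff.1 h with h | ⟨r, hr, h⟩
      · -- skipping the first symbol of `altFrom p` costs one step
        have hT := ihT (p + 1) h
        have hstep := mods4_le_mods4_sub_one_add_one (c - p)
        rw [sub_sub] at hstep
        rw [diffFrom_cons, List.sum_cons] at hT ⊢
        push_cast
        linarith
      · obtain ⟨rfl, rfl⟩ := List.cons.inj hr
        have hc : p + 1 ≡ mods4 (p + 1) [ZMOD 4] := (mods4_modEq _).symm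
        have hT := ih (mods4 (p + 1)) T (by rwa [← altFrom_congr hc])
        have hone : mods4 (mods4 (p + 1) - p) = 1 :=
          (mods4_congr ((hc.symm.sub_right p).trans (by ring_nf; rfl))).trans rfl
        rw [diffFrom_cons, List.sum_cons, hone]
        push_cast
        linarith

lemma exists_sublist_altFrom {x : List ℤ} (hx : IsQ x) (p : ℤ) :
    ∃ T : ℕ, (T : ℤ) = (diffFrom p x).sum ∧ x.Sublist (altFrom p T) := by
  induction x generalizing p with
  | nil => exact ⟨0, rfl, List.nil_sublist _⟩
  | cons c x ih =>
    obtain ⟨⟨hc1, hc4⟩, hx⟩ := isQ_cons.1 hx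
    obtain ⟨T, hT, hsub⟩ := ih hx c
    obtain ⟨k, hk⟩ := Int.eq_ofNat_of_zero_le (by linarith [one_le_mods4 (c - p)] :
      0 ≤ mods4 (c - p) - 1)
    have hkc : p + k + 1 ≡ c [ZMOD 4] := by
      rw [add_assoc, show (k : ℤ) + 1 = mods4 (c - p) by omega]
      simpa using (mods4_modEq (c - p)).add_left p
    refine ⟨k + 1 + T, ?_, ?_⟩
    · rw [diffFrom_cons, List.sum_cons]
      push_cast
      linarith
    · -- the greedy embedding: `c` is the last of the first `k + 1` symbols of `altFrom p`
      have hkc' : p + ((k + 1 : ℕ) : ℤ) ≡ c [ZMOD 4] := by rwa [Nat.cast_succ, ← add_assoc]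
      rw [altFrom_add, altFrom_add, altFrom_one, mods4_congr hkc, mods4_of_le hc1 hc4,
        altFrom_congr hkc']
      exact (List.singleton_sublist.2 List.mem_concat_self).append hsub

lemma synTime_eq_sum_diffWord {x : List ℤ} (hx : IsQ x) : (synTime x : ℤ) = (diffWord x).sum := by
  obtain ⟨T, hT, hsub⟩ := exists_sublist_altFrom hx 0
  have hmem : x.Sublist (altSeq T) := by rwa [altSeq_eq_altFrom_zero]
  have hmin : x.Sublist (altSeq (synTime x)) :=
    Nat.sInf_mem (s := {T | x.Sublist (altSeq T)}) ⟨T, hmem⟩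
  rw [altSeq_eq_altFrom_zero] at hmin
  exact le_antisymm (hT ▸ Nat.cast_le.2 (Nat.sInf_le hmem))
    (sum_diffFrom_le_of_sublist x 0 _ hmin)

def undiffFrom (p : ℤ) : List ℤ → List ℤ
  | [] => []
  | d :: ds => mods4 (p + d) :: undiffFrom (mods4 (p + d)) ds

lemma length_undiffFrom (p : ℤ) (d : List ℤ) : (undiffFrom p d).length = d.length := by
  induction d generalizing p with
  | nil => rfl
  | cons a d ih => simp [undiffFrom, ih]

lemma isQ_undiffFrom (p : ℤ) (d : List ℤ) : IsQ (undiffFrom p d) := by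
  induction d generalizing p with
  | nil => simp [undiffFrom, IsQ]
  | cons a d ih => exact isQ_cons.2 ⟨⟨one_le_mods4 _, mods4_le_four _⟩, ih _⟩

lemma diffFrom_undiffFrom {d : List ℤ} (hd : IsQ d) (p : ℤ) : diffFrom p (undiffFrom p d) = d := by
  induction d generalizing p with
  | nil => rfl
  | cons a d ih =>
    obtain ⟨⟨ha1, ha4⟩, hd⟩ := isQ_cons.1 hd
    have : mods4 (mods4 (p + a) - p) = a := by
      rw [mods4_congr (((mods4_modEq _).sub_right p).trans (by ring_nf; rfl)), mods4_of_le ha1 ha4]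
    rw [undiffFrom, diffFrom_cons, this, ih hd]

lemma undiffFrom_diffFrom {x : List ℤ} (hx : IsQ x) (p : ℤ) : undiffFrom p (diffFrom p x) = x := by
  induction x generalizing p with
  | nil => rfl
  | cons c x ih =>
    obtain ⟨⟨hc1, hc4⟩, hx⟩ := isQ_cons.1 hx
    have : mods4 (p + mods4 (c - p)) = c := by
      rw [mods4_congr (((mods4_modEq _).add_left p).trans (by ring_nf; rfl)), mods4_of_le hc1 hc4]
    rw [diffFrom_cons, undiffFrom, this, ih hx]

def quatWord {n : ℕ} (d : Fin n → Fin 4) : List ℤ := List.ofFn fun i => ((d i : ℕ) : ℤ) + 1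

def weight {n : ℕ} (d : Fin n → Fin 4) : ℕ := ∑ i, ((d i : ℕ) + 1)

lemma isQ_quatWord {n : ℕ} (d : Fin n → Fin 4) : IsQ (quatWord d) := by
  intro a ha
  obtain ⟨i, rfl⟩ := List.mem_ofFn.1 ha
  have := (d i).isLt
  omega

lemma length_quatWord {n : ℕ} (d : Fin n → Fin 4) : (quatWord d).length = n :=
  List.length_ofFn

lemma sum_quatWord {n : ℕ} (d : Fin n → Fin 4) : (quatWord d).sum = weight d := by
  simp [quatWord, weight, List.sum_ofFn]

lemma quatWord_injective (n : ℕ) : Function.Injective (quatWord (n := n)) := by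
  intro d d' h
  funext i
  have := congrFun (List.ofFn_injective h) i
  exact Fin.ext (by omega)

lemma exists_quatWord_eq {n : ℕ} {x : List ℤ} (hx : IsQ x) (hlen : x.length = n) :
    ∃ d : Fin n → Fin 4, quatWord d = x := by
  subst hlen
  have hbound (i : Fin x.length) : x[i.1].toNat - 1 < 4 := by
    have := hx _ (List.getElem_mem i.2); omega
  refine ⟨fun i => ⟨_, hbound i⟩, List.ext_getElem (length_quatWord _) fun j _ h => ?_⟩
  have := hx _ (List.getElem_mem h)
  simp only [quatWord, List.getElem_ofFn]
  omega

lemma W_eq_image (n : ℕ) (T : ℤ) :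
    W n T = (fun d => undiffFrom 0 (quatWord d)) '' {d : Fin n → Fin 4 | (weight d : ℤ) ≤ T} := by
  ext x
  constructor
  · rintro ⟨hlen, hx, hT⟩
    obtain ⟨d, hd⟩ := exists_quatWord_eq (isQ_diffFrom 0 x) ((length_diffFrom 0 x).trans hlen)
    refine ⟨d, ?_, show undiffFrom 0 (quatWord d) = x by rw [hd, undiffFrom_diffFrom hx]⟩
    change (weight d : ℤ) ≤ T
    rw [← sum_quatWord, hd]
    exact (synTime_eq_sum_diffWord hx).symm.trans_le hT
  · rintro ⟨d, hd, rfl⟩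
    refine ⟨(length_undiffFrom _ _).trans (length_quatWord d), isQ_undiffFrom _ _, ?_⟩
    rw [synTime_eq_sum_diffWord (isQ_undiffFrom _ _)]
    change (diffFrom 0 (undiffFrom 0 (quatWord d))).sum ≤ T
    rwa [diffFrom_undiffFrom (isQ_quatWord d), sum_quatWord]

open Finset in
lemma A_eq_card (n : ℕ) (T : ℤ) : A n T = #{d : Fin n → Fin 4 | (weight d : ℤ) ≤ T} := by
  have hinj : Function.Injective fun d : Fin n → Fin 4 => undiffFrom 0 (quatWord d) := by
    intro d d' (h : undiffFrom 0 (quatWord d) = undiffFrom 0 (quatWord d'))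
    apply quatWord_injective n
    rw [← diffFrom_undiffFrom (isQ_quatWord d) 0, h, diffFrom_undiffFrom (isQ_quatWord d') 0]
  rw [A, W_eq_image, Set.ncard_image_of_injective _ hinj, ← coe_filter_univ, Set.ncard_coe_finset]

open PowerSeries

lemma invOfUnit_one_sub_X (R : Type*) [CommRing R] : invOfUnit (1 - X : R⟦X⟧) 1 = mk 1 :=
  (left_inv_eq_right_inv (mk_one_mul_one_sub_eq_one R) (mul_invOfUnit _ _ (by simp))).symm

lemma sum_X_pow_pow_eq_sum_weight (R : Type*) [CommSemiring R] (n : ℕ) :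
    (X + X ^ 2 + X ^ 3 + X ^ 4 : R⟦X⟧) ^ n = ∑ d : Fin n → Fin 4, X ^ weight d := by
  have hbase : (X + X ^ 2 + X ^ 3 + X ^ 4 : R⟦X⟧) = ∑ k : Fin 4, X ^ ((k : ℕ) + 1) := by
    simp [Fin.sum_univ_four]
  rw [hbase, ← Fin.prod_const, Finset.prod_univ_sum, Fintype.piFinset_univ]
  simp only [weight, Finset.prod_pow_eq_pow_sum]

open PowerSeries in
theorem A_generating_function_general (n : ℕ) :
    PowerSeries.mk (fun T : ℕ => (A n (T : ℤ) : ℤ)) =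
      (X + X ^ 2 + X ^ 3 + X ^ 4) ^ n *
        PowerSeries.invOfUnit (1 - X : PowerSeries ℤ) 1 := by
  ext T
  simp only [invOfUnit_one_sub_X, sum_X_pow_pow_eq_sum_weight, Finset.sum_mul, map_sum,
    coeff_X_pow_mul', coeff_mk, Pi.one_apply, Finset.sum_boole, A_eq_card, Nat.cast_le]

open PowerSeries in
/-- the generating function identity
`∑_{T ≥ 0} A(n,T) z^T = (z + z² + z³ + z⁴)^n · (1 - z)⁻¹` in `ℤ⟦z⟧`,
where the inverse of `1 - z` is taken via its unit constant term `1`. -/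
theorem A_generating_function (n : ℕ) (hn : 0 < n) :
    PowerSeries.mk (fun T : ℕ => (A n (T : ℤ) : ℤ)) =
      (X + X ^ 2 + X ^ 3 + X ^ 4) ^ n *
        PowerSeries.invOfUnit (1 - X : PowerSeries ℤ) 1 :=
  A_generating_function_general n
end

section
/- For every positive integer n and integer T with 5n ≤ 2T and T ≤ 4n, there exists an (n,T,B)-synthesis code C ⊆ Σ^n with |C| ≥ 4^{n−1} / (2n); hence its redundancy 2n − log₂|C| is at most 3 + log₂ n bits. -/
/-!
The code is one class `VTnT n a b T` of the quaternary Varshamov–Tenengolts code: the words of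
synthesis time at most `T` whose auxiliary binary sequence has VT syndrome `a` modulo `n` and whose
symbol sum is `b` modulo 4.

The synthesis time of `x` is at most the sum of its differential word, and the involution
`x_i ↦ i + 1 - x_i (mod 4)` turns a differential sum `s` into `5n - s`. Hence at least half of the
`4^n` words have synthesis time at most `5n/2 ≤ T`, and by pigeonhole one of the `4n` classes
contains at least `4^n / (8n) = 4^(n-1) / (2n)` of them.

Each class corrects a single deletion: the symbol sum determines the deleted symbol, and the binary
VT property of the auxiliary sequence determines where it was deleted up to moving it within a run.
By Levenshtein's argument, two distinct words of the same length with a common supersequence one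
symbol longer also have a common subsequence one symbol shorter, so the single-indel balls of the
class are disjoint.
-/

lemma mods4_mem_Icc (a : ℤ) : 1 ≤ mods4 a ∧ mods4 a ≤ 4 := by
  unfold mods4; omega

lemma IsQ.cons_iff {a : ℤ} {x : List ℤ} : IsQ (a :: x) ↔ (1 ≤ a ∧ a ≤ 4) ∧ IsQ x :=
  List.forall_mem_cons

/-- The differential word of `x` following the symbol `p`, so that `diffWord = diffWordFrom 0`. -/
def diffWordFrom (p : ℤ) (x : List ℤ) : List ℤ :=
  List.zipWith (fun p c => mods4 (c - p)) (p :: x) x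

@[simp] lemma diffWordFrom_nil (p : ℤ) : diffWordFrom p [] = [] := rfl

@[simp] lemma diffWordFrom_cons (p c : ℤ) (x : List ℤ) :
    diffWordFrom p (c :: x) = mods4 (c - p) :: diffWordFrom c x := rfl

lemma sum_diffWordFrom_nonneg (p : ℤ) (x : List ℤ) : 0 ≤ (diffWordFrom p x).sum := by
  induction x generalizing p with
  | nil => simp
  | cons c x ih =>
    simp only [diffWordFrom_cons, List.sum_cons]
    linarith [(mods4_mem_Icc (c - p)).1, ih c]

lemma getElem_altSeq {T i : ℕ} (hi : i < (altSeq T).length) :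
    (altSeq T)[i] = ((i % 4 : ℕ) : ℤ) + 1 := by
  simp [altSeq]

/-- Greedy embedding: after position `t ≡ p`, the symbol `c` is found `mods4 (c - p)` steps on. -/
lemma sublist_drop_altSeq {x : List ℤ} (hx : IsQ x) (p : ℤ) (t T : ℕ)
    (ht : (t : ℤ) ≡ p [ZMOD 4]) (hT : t + (diffWordFrom p x).sum ≤ T) :
    x.Sublist ((altSeq T).drop t) := by
  induction x generalizing p t with
  | nil => simp
  | cons c x ih =>
    obtain ⟨hc, hx⟩ := IsQ.cons_iff.mp hx
    have hd := mods4_mem_Icc (c - p)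
    have hdc : (mods4 (c - p) - (c - p)) % 4 = 0 := by unfold mods4; omega
    have hrest := sum_diffWordFrom_nonneg c x
    simp only [diffWordFrom_cons, List.sum_cons] at hT
    unfold Int.ModEq at ht
    obtain ⟨s, hs⟩ : ∃ s : ℕ, (s : ℤ) = t + mods4 (c - p) - 1 :=
      ⟨(t + mods4 (c - p) - 1).toNat, by omega⟩
    have hsT : s < (altSeq T).length := by simp [altSeq]; omega
    have hsc : (altSeq T)[s] = c := by rw [getElem_altSeq]; omega
    have htail := ih hx c (s + 1) (by unfold Int.ModEq; push_cast; omega) (by push_cast; omega)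
    have hdrop : (altSeq T).drop s = c :: (altSeq T).drop (s + 1) := by
      rw [List.drop_eq_getElem_cons hsT, hsc]
    exact (hdrop ▸ htail.cons_cons c).trans (List.drop_sublist_drop_left _ (by omega))

theorem synTime_le_sum_diffWord {x : List ℤ} (hx : IsQ x) :
    (synTime x : ℤ) ≤ (diffWord x).sum := by
  have h := sublist_drop_altSeq hx 0 0 (diffWordFrom 0 x).sum.toNat rfl (by simp)
  have : synTime x ≤ (diffWordFrom 0 x).sum.toNat := Nat.sInf_le (by simpa using h)
  have := sum_diffWordFrom_nonneg 0 x
  change (synTime x : ℤ) ≤ (diffWordFrom 0 x).sum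
  omega

/-- `mirror k x` replaces the `i`-th symbol `a` of `x` (counting from `0`) by `k + i - a` mod 4. -/
def mirror : ℤ → List ℤ → List ℤ
  | _, [] => []
  | k, a :: x => mods4 (k - a) :: mirror (k + 1) x

@[simp] lemma length_mirror (k : ℤ) (x : List ℤ) : (mirror k x).length = x.length := by
  induction x generalizing k <;> simp [mirror, *]

lemma isQ_mirror (k : ℤ) (x : List ℤ) : IsQ (mirror k x) := by
  induction x generalizing k with
  | nil => simp [mirror, IsQ]
  | cons a x ih => exact IsQ.cons_iff.mpr ⟨mods4_mem_Icc _, ih (k + 1)⟩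

lemma mirror_mirror (k : ℤ) {x : List ℤ} (hx : IsQ x) : mirror k (mirror k x) = x := by
  induction x generalizing k with
  | nil => rfl
  | cons a x ih =>
    obtain ⟨ha, hx⟩ := IsQ.cons_iff.mp hx
    simp only [mirror, ih (k + 1) hx, List.cons.injEq, and_true]
    unfold mods4; omega

/-- Mirroring turns each differential symbol `d` into `mods4 (1 - d) = 5 - d`. -/
lemma sum_diffWordFrom_add_sum_diffWordFrom_mirror (x : List ℤ) (p q k : ℤ)
    (hk : k ≡ p + q + 1 [ZMOD 4]) :
    (diffWordFrom p x).sum + (diffWordFrom q (mirror k x)).sum = 5 * x.length := by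
  induction x generalizing p q k with
  | nil => simp [mirror]
  | cons a x ih =>
    have hstep : mods4 (a - p) + mods4 (mods4 (k - a) - q) = 5 := by
      unfold Int.ModEq at hk; unfold mods4; omega
    have hrest := ih a (mods4 (k - a)) (k + 1) (by unfold Int.ModEq mods4 at *; omega)
    simp only [mirror, diffWordFrom_cons, List.sum_cons, List.length_cons]
    push_cast
    linarith

noncomputable def quatWords : ℕ → Finset (List ℤ)
  | 0 => {[]}
  | n + 1 => Finset.image₂ List.cons (Finset.Icc 1 4) (quatWords n)

lemma mem_quatWords {n : ℕ} {x : List ℤ} : x ∈ quatWords n ↔ x.length = n ∧ IsQ x := by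
  induction n generalizing x with
  | zero => simp +contextual [quatWords, IsQ, List.length_eq_zero_iff]
  | succ n ih =>
    cases x with
    | nil => simp [quatWords]
    | cons a x => simp [quatWords, ih, IsQ.cons_iff, and_left_comm]

lemma card_quatWords (n : ℕ) : (quatWords n).card = 4 ^ n := by
  induction n with
  | zero => rfl
  | succ n ih =>
    rw [quatWords, Finset.card_image₂ (fun _ _ _ _ h => List.cons.inj h), ih]
    simp [pow_succ, mul_comm]

lemma four_pow_le_two_mul_card_sum_diffWord_le (n : ℕ) {T : ℤ} (hT : (5 * n : ℤ) ≤ 2 * T) :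
    4 ^ n ≤ 2 * ((quatWords n).filter fun x => (diffWord x).sum ≤ T).card := by
  set good := (quatWords n).filter fun x => (diffWord x).sum ≤ T
  have hmaps : ∀ x ∈ quatWords n \ good, mirror 1 x ∈ good := by
    intro x hx
    simp only [good, Finset.mem_sdiff, Finset.mem_filter, mem_quatWords] at hx ⊢
    obtain ⟨⟨hlen, hq⟩, hbig⟩ := hx
    have hsum := sum_diffWordFrom_add_sum_diffWordFrom_mirror x 0 0 1 rfl
    have hbig : T < (diffWordFrom 0 x).sum := not_le.mp fun h => hbig ⟨⟨hlen, hq⟩, h⟩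
    refine ⟨⟨by simp [hlen], isQ_mirror 1 x⟩, ?_⟩
    change (diffWordFrom 0 _).sum ≤ T
    omega
  have hinj : Set.InjOn (mirror 1) ↑(quatWords n \ good) := by
    intro x hx y hy hxy
    simp only [Finset.coe_sdiff, Set.mem_sdiff, Finset.mem_coe, mem_quatWords] at hx hy
    rw [← mirror_mirror 1 hx.1.2, hxy, mirror_mirror 1 hy.1.2]
  have hle := Finset.card_le_card_of_injOn (mirror 1) hmaps hinj
  have hsplit : (quatWords n \ good).card + good.card = (quatWords n).card :=
    Finset.card_sdiff_add_card_eq_card (Finset.filter_subset _ _)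
  rw [← card_quatWords n]
  omega

lemma append_cons_replicate {α : Type*} (L R : List α) (a : α) (m : ℕ) :
    L ++ a :: (List.replicate m a ++ R) = L ++ List.replicate m a ++ a :: R := by
  rw [List.append_assoc, ← List.cons_append, ← List.replicate_succ, List.replicate_succ',
    List.append_assoc, List.singleton_append]

lemma exists_eq_append_of_append_eq_append {α : Type*} {L₁ R₁ L₂ R₂ : List α}
    (h : L₁ ++ R₁ = L₂ ++ R₂) (hle : L₁.length ≤ L₂.length) : ∃ S, L₂ = L₁ ++ S ∧ R₁ = S ++ R₂ := by
  obtain ⟨S, hS⟩ := List.prefix_of_prefix_length_le (List.prefix_append L₁ R₁)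
    (h ▸ List.prefix_append L₂ R₂) hle
  refine ⟨S, hS.symm, List.append_cancel_left (as := L₁) ?_⟩
  rw [h, ← hS, List.append_assoc]

lemma exists_eq_append_cons_of_sublist {α : Type*} {z x : List α} (h : z.Sublist x)
    (hl : z.length + 1 = x.length) : ∃ u c r, x = u ++ c :: r ∧ z = u ++ r := by
  induction h with
  | slnil => simp at hl
  | @cons l₁ l₂ a h _ =>
    exact ⟨[], a, l₂, rfl, h.eq_of_length (by simpa using hl)⟩
  | @cons_cons l₁ l₂ a _ ih =>
    obtain ⟨u, c, r, rfl, rfl⟩ := ih (by simpa using hl)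
    exact ⟨a :: u, c, r, rfl, rfl⟩

lemma sum_range_getD_eq_sum (l : List ℕ) : ∑ i ∈ Finset.range l.length, l.getD i 0 = l.sum := by
  induction l with
  | nil => simp
  | cons a l ih =>
    rw [List.length_cons, Finset.sum_range_succ']
    simp only [List.getD_cons_succ, List.getD_cons_zero, ih, List.sum_cons]
    omega

@[simp] lemma vtSyn_nil : vtSyn [] = 0 := rfl

lemma vtSyn_cons (a : ℕ) (l : List ℕ) : vtSyn (a :: l) = a + l.sum + vtSyn l := by
  simp only [vtSyn, List.length_cons, Finset.sum_range_succ', List.getD_cons_succ,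
    List.getD_cons_zero, add_mul, one_mul, Finset.sum_add_distrib, sum_range_getD_eq_sum]
  ring

lemma vtSyn_append (s t : List ℕ) : vtSyn (s ++ t) = vtSyn s + s.length * t.sum + vtSyn t := by
  induction s with
  | nil => simp
  | cons a s ih =>
    simp only [List.cons_append, vtSyn_cons, ih, List.sum_append, List.length_cons]
    ring

lemma vtSyn_insert (L R : List ℕ) (a : ℕ) :
    vtSyn (L ++ a :: R) = vtSyn (L ++ R) + (L.length + 1) * a + R.sum := by
  rw [vtSyn_append, vtSyn_append, vtSyn_cons, List.sum_cons]
  ring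

lemma eq_replicate_of_sum_eq {S : List ℕ} {a : ℕ} (hS : ∀ t ∈ S, t ≤ 1) (ha : a ≤ 1)
    (h : S.sum = S.length * a) : S = List.replicate S.length a := by
  induction S with
  | nil => rfl
  | cons t S ih =>
    have hle := List.sum_le_card_nsmul S 1 fun x hx => hS x (List.mem_cons_of_mem _ hx)
    have ht := hS t List.mem_cons_self
    simp only [List.sum_cons, List.length_cons, smul_eq_mul, mul_one] at h hle
    have hta : t = a := by interval_cases a <;> interval_cases t <;> omega
    subst hta
    rw [List.length_cons, List.replicate_succ]
    exact congrArg _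
      (ih (fun x hx => hS x (List.mem_cons_of_mem _ hx)) (by interval_cases t <;> omega))

/-- The syndromes differ by `(|L₁| + 1) a - (|L₂| + 1) b + ∑ S`, where `S` is the stretch between
the two insertion points; this is smaller than the modulus in absolute value, and it vanishes only
if `a = b` and `S` is constantly `a`. -/
theorem eq_of_vtSyn_insert_modEq {L₁ R₁ L₂ R₂ : List ℕ} {a b : ℕ}
    (hbin : ∀ t ∈ L₁ ++ R₁, t ≤ 1) (ha : a ≤ 1) (hb : b ≤ 1) (hγ : L₁ ++ R₁ = L₂ ++ R₂)
    (h : vtSyn (L₁ ++ a :: R₁) ≡ vtSyn (L₂ ++ b :: R₂) [MOD (L₁ ++ R₁).length + 2]) :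
    L₁ ++ a :: R₁ = L₂ ++ b :: R₂ := by
  wlog hle : L₁.length ≤ L₂.length generalizing L₁ R₁ L₂ R₂ a b
  · exact (this (hγ ▸ hbin) hb ha hγ.symm (hγ ▸ h.symm) (by omega)).symm
  obtain ⟨S, rfl, rfl⟩ := exists_eq_append_of_append_eq_append hγ hle
  have hS : ∀ t ∈ S, t ≤ 1 := fun t ht => hbin t (by simp [ht])
  have hsum := List.sum_le_card_nsmul S 1 hS
  simp only [smul_eq_mul, mul_one] at hsum
  rw [vtSyn_insert, vtSyn_insert, ← hγ, List.sum_append] at h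
  simp only [List.length_append] at h
  set s := S.sum with hs
  generalize vtSyn (L₁ ++ (S ++ R₂)) = V at h
  have hvt := h.eq_of_abs_lt (by
    rw [abs_lt]; constructor <;> push_cast <;> interval_cases a <;> interval_cases b <;> omega)
  have hab : a = b := by interval_cases a <;> interval_cases b <;> omega
  subst hab
  rw [eq_replicate_of_sum_eq hS ha (by interval_cases a <;> omega), append_cons_replicate]

def ascBit (a b : ℤ) : ℕ := if a ≤ b then 1 else 0

lemma ascBit_le_one (a b : ℤ) : ascBit a b ≤ 1 := by
  unfold ascBit; split <;> omega

@[simp] lemma auxSeq_nil : auxSeq [] = [] := rfl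

@[simp] lemma auxSeq_singleton (a : ℤ) : auxSeq [a] = [] := rfl

@[simp] lemma auxSeq_cons_cons (a b : ℤ) (l : List ℤ) :
    auxSeq (a :: b :: l) = ascBit a b :: auxSeq (b :: l) := rfl

@[simp] lemma length_auxSeq (l : List ℤ) : (auxSeq l).length = l.length - 1 := by
  simp [auxSeq]

lemma le_one_of_mem_auxSeq {l : List ℤ} {t : ℕ} (ht : t ∈ auxSeq l) : t ≤ 1 := by
  induction l with
  | nil => simp at ht
  | cons a l ih =>
    cases l with
    | nil => simp at ht
    | cons b l =>
      rcases List.mem_cons.mp ht with rfl | ht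
      · exact ascBit_le_one a b
      · exact ih ht

lemma auxSeq_append_cons (u : List ℤ) (b : ℤ) (r : List ℤ) :
    auxSeq (u ++ b :: r) = auxSeq (u ++ [b]) ++ auxSeq (b :: r) := by
  induction u with
  | nil => simp
  | cons a u ih =>
    cases u with
    | nil => simp
    | cons a' u => simp only [List.cons_append, auxSeq_cons_cons] at ih ⊢; rw [ih]

lemma ascBit_eq_or_eq (p c b : ℤ) : ascBit p b = ascBit p c ∨ ascBit p b = ascBit c b := by
  unfold ascBit; split_ifs <;> omega

lemma exists_auxSeq_insert {u r : List ℤ} (c : ℤ) (h : u ++ r ≠ []) :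
    ∃ L R δ, auxSeq (u ++ r) = L ++ R ∧ auxSeq (u ++ c :: r) = L ++ δ :: R := by
  rcases List.eq_nil_or_concat u with rfl | ⟨u, p, rfl⟩
  · obtain ⟨b, r, rfl⟩ := List.exists_cons_of_ne_nil h
    exact ⟨[], auxSeq (b :: r), ascBit c b, rfl, rfl⟩
  · have hp : ∀ r, auxSeq (u.concat p ++ r) = auxSeq (u ++ [p]) ++ auxSeq (p :: r) := by
      intro r; rw [List.concat_eq_append, List.append_assoc, List.singleton_append,
        auxSeq_append_cons]
    cases r with
    | nil => exact ⟨auxSeq (u ++ [p]), [], ascBit p c, by simp, by rw [hp]; rfl⟩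
    | cons b r =>
      rcases ascBit_eq_or_eq p c b with hb | hb
      · exact ⟨auxSeq (u ++ [p]) ++ [ascBit p c], auxSeq (b :: r), ascBit c b,
          by rw [hp]; simp [hb], by rw [hp]; simp⟩
      · exact ⟨auxSeq (u ++ [p]), ascBit c b :: auxSeq (b :: r), ascBit p c,
          by rw [hp]; simp [hb], by rw [hp]; simp⟩

/-- Equal auxiliary sequences force the bits along `a, v, c` to agree, so this path is monotone. -/
lemma isChain_of_auxSeq_cons_eq {a c : ℤ} {v : List ℤ} (w : List ℤ)
    (h : auxSeq (a :: (v ++ w)) = auxSeq (v ++ c :: w)) :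
    (a :: v ++ [c]).IsChain (· ≤ ·) ∨ (a :: v ++ [c]).IsChain (· > ·) := by
  induction v generalizing a with
  | nil =>
    rcases le_or_gt a c with hac | hac
    · exact Or.inl (by simp [hac])
    · exact Or.inr (by simp [hac])
  | cons t v ih =>
    obtain ⟨s, l, hs⟩ := List.exists_cons_of_ne_nil (show v ++ [c] ≠ [] by simp)
    have htail : auxSeq (t :: (v ++ w)) = auxSeq (v ++ c :: w) := by cases v <;> simp_all
    have hbit : a ≤ t ↔ t ≤ s := by
      have h : ascBit a t = ascBit t s := by cases v <;> simp_all
      unfold ascBit at h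
      split_ifs at h <;> tauto
    have hch := ih htail
    simp only [List.cons_append, hs, List.isChain_cons_cons] at hch ⊢
    rcases hch with ⟨hts, hch⟩ | ⟨hts, hch⟩
    · exact Or.inl ⟨hbit.mpr hts, hts, hch⟩
    · exact Or.inr ⟨not_le.mp fun hat => (not_le.mpr hts) (hbit.mp hat), hts, hch⟩

lemma eq_replicate_of_auxSeq_cons_eq {c : ℤ} {v : List ℤ} (w : List ℤ)
    (h : auxSeq (c :: (v ++ w)) = auxSeq (v ++ c :: w)) : v = List.replicate v.length c := by
  rcases isChain_of_auxSeq_cons_eq w h with hch | hch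
  · rw [List.isChain_iff_pairwise, List.cons_append, List.pairwise_cons,
      List.pairwise_append] at hch
    exact List.eq_replicate_of_mem fun b hb =>
      le_antisymm (hch.2.2.2 b hb c (by simp)) (hch.1 b (by simp [hb]))
  · rw [List.isChain_iff_pairwise, List.cons_append, List.pairwise_cons] at hch
    exact absurd (hch.1 c (by simp)) (lt_irrefl c)

lemma eq_of_auxSeq_move_eq {u v w : List ℤ} {c : ℤ}
    (h : auxSeq (u ++ c :: (v ++ w)) = auxSeq (u ++ v ++ c :: w)) :
    u ++ c :: (v ++ w) = u ++ v ++ c :: w := by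
  rcases v with _ | ⟨v₀, v⟩
  · simp
  have hcancel : auxSeq (c :: (v₀ :: v ++ w)) = auxSeq (v₀ :: v ++ c :: w) := by
    simp only [List.append_assoc, List.cons_append] at h
    rw [auxSeq_append_cons u v₀, auxSeq_append_cons u c] at h
    exact List.append_inj_right h (by simp)
  rw [eq_replicate_of_auxSeq_cons_eq w hcancel, append_cons_replicate]

/-- The auxiliary sequences of both words are single-bit insertions into that of `u₁ ++ r₁`, with
congruent VT syndromes, so they agree. -/
lemma VTn.eq_of_insert {n : ℕ} {a : ZMod n} {b : ZMod 4} {u₁ r₁ u₂ r₂ : List ℤ} {c : ℤ}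
    (hx : u₁ ++ c :: r₁ ∈ VTn n a b) (hy : u₂ ++ c :: r₂ ∈ VTn n a b)
    (hz : u₁ ++ r₁ = u₂ ++ r₂) : u₁ ++ c :: r₁ = u₂ ++ c :: r₂ := by
  wlog hle : u₁.length ≤ u₂.length generalizing u₁ r₁ u₂ r₂
  · exact (this hy hx hz.symm (by omega)).symm
  obtain ⟨v, rfl, rfl⟩ := exists_eq_append_of_append_eq_append hz hle
  obtain ⟨hlen, -, hx, -⟩ := hx
  obtain ⟨-, -, hy, -⟩ := hy
  by_cases hnil : u₁ ++ v ++ r₂ = []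
  · simp_all
  refine eq_of_auxSeq_move_eq ?_
  obtain ⟨L₁, R₁, δ₁, hγ₁, hx₁⟩ :=
    exists_auxSeq_insert c (u := u₁) (r := v ++ r₂) (by simpa using hnil)
  obtain ⟨L₂, R₂, δ₂, hγ₂, hy₂⟩ := exists_auxSeq_insert c (u := u₁ ++ v) (r := r₂) hnil
  rw [List.append_assoc] at hγ₂
  have hδ₁ : δ₁ ≤ 1 := le_one_of_mem_auxSeq (l := u₁ ++ c :: (v ++ r₂)) (by simp [hx₁])
  have hδ₂ : δ₂ ≤ 1 := le_one_of_mem_auxSeq (l := u₁ ++ v ++ c :: r₂) (by rw [hy₂]; simp)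
  rw [hx₁, hy₂]
  refine eq_of_vtSyn_insert_modEq (fun t ht => le_one_of_mem_auxSeq (hγ₁ ▸ ht)) hδ₁ hδ₂
    (hγ₁.symm.trans hγ₂) ?_
  rw [← hγ₁, length_auxSeq, ← hx₁, ← hy₂]
  convert (ZMod.natCast_eq_natCast_iff _ _ n).mp (hx.trans hy.symm) using 2
  have hpos := List.length_pos_of_ne_nil hnil
  simp only [List.length_append, List.length_cons] at hlen hpos ⊢
  omega

theorem VTn.eq_of_sublist_of_sublist {n : ℕ} {a : ZMod n} {b : ZMod 4} {x y z : List ℤ}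
    (hx : x ∈ VTn n a b) (hy : y ∈ VTn n a b) (hz : z.length + 1 = n)
    (hzx : z.Sublist x) (hzy : z.Sublist y) : x = y := by
  obtain ⟨u₁, c₁, r₁, rfl, rfl⟩ := exists_eq_append_cons_of_sublist hzx (by rw [hz, hx.1])
  obtain ⟨u₂, c₂, r₂, rfl, hz₂⟩ := exists_eq_append_cons_of_sublist hzy (by rw [hz, hy.1])
  have hc : c₁ = c₂ := by
    have h₁ := hx.2.1 c₁ (by simp)
    have h₂ := hy.2.1 c₂ (by simp)
    have hsum := (ZMod.intCast_eq_intCast_iff' _ _ 4).mp (hx.2.2.2.trans hy.2.2.2.symm)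
    have hzsum := congrArg List.sum hz₂
    simp only [List.sum_append, List.sum_cons] at hsum hzsum
    omega
  subst hc
  exact VTn.eq_of_insert hx hy hz₂

lemma exists_common_sublist_of_append_cons_eq {α : Type*} {u₁ r₁ u₂ r₂ : List α} {c₁ c₂ : α}
    (ht : u₁ ++ c₁ :: r₁ = u₂ ++ c₂ :: r₂) (hne : u₁ ++ r₁ ≠ u₂ ++ r₂) :
    ∃ z : List α,
      z.length + 1 = (u₁ ++ r₁).length ∧ z.Sublist (u₁ ++ r₁) ∧ z.Sublist (u₂ ++ r₂) := by
  have hlen : (u₁ ++ r₁).length = (u₂ ++ r₂).length := by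
    have := congrArg List.length ht
    simp only [List.length_append, List.length_cons] at this ⊢
    omega
  wlog hle : u₁.length ≤ u₂.length generalizing u₁ c₁ r₁ u₂ c₂ r₂
  · obtain ⟨z, hz, hzy, hzx⟩ := this ht.symm hne.symm hlen.symm (by omega)
    exact ⟨z, hlen ▸ hz, hzx, hzy⟩
  obtain ⟨v, rfl, hr⟩ := exists_eq_append_of_append_eq_append ht hle
  rcases v with _ | ⟨c, s⟩
  · simp_all
  obtain ⟨rfl, rfl⟩ : c₁ = c ∧ r₁ = s ++ c₂ :: r₂ := by simpa using hr
  refine ⟨u₁ ++ s ++ r₂, by simp; omega, ?_, ?_⟩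
  · simp
  · simp [(List.sublist_cons_self c₁ (s ++ r₂)).append_left u₁]

lemma exists_common_sublist_of_common_supersequence {α : Type*} {x y t : List α} (hne : x ≠ y)
    (hxt : x.Sublist t) (hyt : y.Sublist t) (hx : x.length + 1 = t.length)
    (hy : y.length + 1 = t.length) :
    ∃ z : List α, z.length + 1 = x.length ∧ z.Sublist x ∧ z.Sublist y := by
  obtain ⟨u₁, c₁, r₁, rfl, rfl⟩ := exists_eq_append_cons_of_sublist hxt hx
  obtain ⟨u₂, c₂, r₂, ht, rfl⟩ := exists_eq_append_cons_of_sublist hyt hy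
  exact exists_common_sublist_of_append_cons_eq ht hne

lemma VTn.pairwise_disjoint_ball (n : ℕ) (a : ZMod n) (b : ZMod 4) :
    (VTn n a b).Pairwise fun x y => Disjoint (ball x) (ball y) := by
  intro x hx y hy hne
  have hxn := hx.1
  have hyn := hy.1
  rw [Set.disjoint_left]
  rintro t (rfl | ⟨htx, hsubx⟩ | ⟨htx, -, hsupx⟩) (rfl | ⟨hty, hsuby⟩ | ⟨hty, -, hsupy⟩)
  all_goals first
    | exact hne rfl
    | omega
    | skip
  · exact hne (VTn.eq_of_sublist_of_sublist hx hy (by omega) hsubx hsuby)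
  · obtain ⟨z, hz, hzx, hzy⟩ :=
      exists_common_sublist_of_common_supersequence hne hsupx hsupy (by omega) (by omega)
    exact hne (VTn.eq_of_sublist_of_sublist hx hy (by omega) hzx hzy)

lemma W_eq_coe_filter (n : ℕ) (T : ℤ) :
    W n T = ↑((quatWords n).filter fun x => (synTime x : ℤ) ≤ T) := by
  ext x
  simp [W, mem_quatWords, and_assoc]

def vtClass (n : ℕ) (x : List ℤ) : ZMod n × ZMod 4 :=
  (((vtSyn (auxSeq x) : ℕ) : ZMod n), ((x.sum : ℤ) : ZMod 4))

lemma VTnT_eq_coe_filter (n : ℕ) (a : ZMod n) (b : ZMod 4) (T : ℤ) :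
    VTnT n a b T =
      ↑(((quatWords n).filter fun x => (synTime x : ℤ) ≤ T).filter (vtClass n · = (a, b))) := by
  ext x
  simp only [VTnT, VTn, vtClass, Set.mem_ofPred_eq, Finset.coe_filter, Finset.mem_filter,
    mem_quatWords, Prod.mk.injEq]
  tauto

lemma four_pow_le_two_mul_A (n : ℕ) {T : ℤ} (hT : (5 * n : ℤ) ≤ 2 * T) : 4 ^ n ≤ 2 * A n T := by
  rw [A, W_eq_coe_filter, Set.ncard_coe_finset]
  refine (four_pow_le_two_mul_card_sum_diffWord_le n hT).trans
    (Nat.mul_le_mul_left 2 (Finset.card_le_card fun x hx => ?_))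
  simp only [Finset.mem_filter, mem_quatWords] at hx ⊢
  exact ⟨hx.1, (synTime_le_sum_diffWord hx.1.2).trans hx.2⟩

lemma exists_le_ncard_VTnT (n : ℕ) [NeZero n] (T : ℤ) :
    ∃ a b, (A n T : ℝ) / (4 * n) ≤ (VTnT n a b T).ncard := by
  have hn : (0 : ℝ) < n := by exact_mod_cast Nat.pos_of_neZero n
  have hA : A n T = ((quatWords n).filter fun x => (synTime x : ℤ) ≤ T).card := by
    rw [A, W_eq_coe_filter, Set.ncard_coe_finset]
  obtain ⟨⟨a, b⟩, -, hab⟩ := Finset.exists_le_card_fiber_of_nsmul_le_card_of_maps_to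
    (fun x _ => Finset.mem_univ (vtClass n x)) Finset.univ_nonempty
    (b := (A n T : ℝ) / (4 * n)) (by
      rw [Finset.card_univ, Fintype.card_prod, ZMod.card, ZMod.card, nsmul_eq_mul, ← hA]
      push_cast
      field_simp
      rfl)
  exact ⟨a, b, by rwa [VTnT_eq_coe_filter, Set.ncard_coe_finset]⟩

lemma two_mul_sub_logb_le {n : ℕ} (hn : 0 < n) {m : ℝ} (hm : (4 : ℝ) ^ (n - 1) / (2 * n) ≤ m) :
    2 * (n : ℝ) - Real.logb 2 m ≤ 3 + Real.logb 2 n := by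
  have hn' : (0 : ℝ) < n := by exact_mod_cast hn
  have hlog := Real.logb_le_logb_of_le (b := 2) (by norm_num) (by positivity) hm
  have h4 : Real.logb 2 ((4 : ℝ) ^ (n - 1)) = 2 * (n - 1 : ℕ) := by
    rw [Real.logb_pow, show (4 : ℝ) = 2 ^ (2 : ℕ) by norm_num, Real.logb_pow,
      Real.logb_self_eq_one (by norm_num)]
    ring
  rw [Real.logb_div (by positivity) (by positivity), Real.logb_mul (by norm_num) hn'.ne', h4,
    Real.logb_self_eq_one (by norm_num), Nat.cast_sub hn] at hlog
  push_cast at hlog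
  linarith

theorem exists_synthesis_code_2_5n_general (n : ℕ) (hn : 0 < n) (T : ℤ)
    (hT1 : (5 * n : ℤ) ≤ 2 * T) :
    ∃ C : Set (List ℤ),
      (∀ x ∈ C, x.length = n ∧ IsQ x) ∧
      (∀ x ∈ C, (synTime x : ℤ) ≤ T) ∧
      (C.Pairwise fun x y => Disjoint (ball x) (ball y)) ∧
      (4 : ℝ) ^ (n - 1) / (2 * n) ≤ (C.ncard : ℝ) ∧
      2 * (n : ℝ) - Real.logb 2 (C.ncard : ℝ) ≤ 3 + Real.logb 2 n := by
  have : NeZero n := ⟨hn.ne'⟩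
  obtain ⟨a, b, hC⟩ := exists_le_ncard_VTnT n T
  have hA : (4 : ℝ) ^ n ≤ 2 * A n T := by exact_mod_cast four_pow_le_two_mul_A n hT1
  have hsize : (4 : ℝ) ^ (n - 1) / (2 * n) ≤ (VTnT n a b T).ncard := calc
    (4 : ℝ) ^ (n - 1) / (2 * n) = (4 : ℝ) ^ n / 2 / (4 * n) := by
      rw [pow_sub₀ _ four_ne_zero hn]; field_simp; ring
    _ ≤ A n T / (4 * n) := by gcongr; linarith
    _ ≤ (VTnT n a b T).ncard := hC
  exact ⟨VTnT n a b T, fun x hx => ⟨hx.1.1, hx.1.2.1⟩, fun x hx => hx.2,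
    (VTn.pairwise_disjoint_ball n a b).mono (Set.sep_subset _ _), hsize,
    two_mul_sub_logb_le hn hsize⟩

/-- for `5n ≤ 2T` and `T ≤ 4n` there exists an `(n,T,B)`-synthesis
code `C ⊆ Σ^n` with `|C| ≥ 4^{n-1}/(2n)`; hence its redundancy
`2n - log₂ |C|` is at most `3 + log₂ n` bits. -/
theorem exists_synthesis_code_2_5n (n : ℕ) (hn : 0 < n) (T : ℤ)
    (hT1 : (5 * n : ℤ) ≤ 2 * T) (hT2 : T ≤ 4 * n) :
    ∃ C : Set (List ℤ),
      (∀ x ∈ C, x.length = n ∧ IsQ x) ∧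
      (∀ x ∈ C, (synTime x : ℤ) ≤ T) ∧
      (C.Pairwise fun x y => Disjoint (ball x) (ball y)) ∧
      (4 : ℝ) ^ (n - 1) / (2 * n) ≤ (C.ncard : ℝ) ∧
      2 * (n : ℝ) - Real.logb 2 (C.ncard : ℝ) ≤ 3 + Real.logb 2 n :=
  exists_synthesis_code_2_5n_general n hn T hT1
end
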